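/- arXiv:1508.01819 — 3 statements merged into one kernel-verified Lean document; each statement's English description precedes it below -/
import Mathlib

section
/- The total variation distance between Binomial(m′, λ/m) and Poisson(m′λ/m) is at most λ/m. -/
open ProbabilityTheory

/-- Total variation distance between two probability mass functions on ℕ. -/
noncomputable def tvDist (f g : ℕ → ℝ) : ℝ := (1 / 2) * ∑' k, |f k - g k|

/-- The Binomial(m', p) probability mass function on ℕ. -/
noncomputable def binomialPMFReal (m' : ℕ) (p : ℝ) (k : ℕ) : ℝ :=
  (m'.choose k : ℝ) * p ^ k * (1 - p) ^ (m' - k)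

/-!
Stein–Chen method. For a finite set `A`, the Poisson Stein equation
`r F (j + 1) - j F j = 𝟙_A j - Po(r)(A)` has a solution whose increments `F (j + 2) - F (j + 1)`
are at most `1 / r`: it is the sum of the one-point solutions, and by log-concavity of the Poisson
weights these have non-positive increments except at their own point, where the increment is
at most `1 / r`. For `W ∼ Bin(n + 1, p)`, `W' ∼ Bin(n, p)` and `r = (n + 1) p`, the identities
`k b_{n+1}(k) = r b_n(k - 1)` and `b_{n+1}(k) = (1 - p) b_n(k) + p b_n(k - 1)` give
`𝔼[r F (W + 1) - W F W] = r p 𝔼[F (W' + 2) - F (W' + 1)] ≤ p`. With `A = {b_{n+1} ≥ Po(r)}` the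
left side is `P(W ∈ A) - Po(r)(A)`, the total variation distance.
-/

set_option linter.deprecated false

open Finset
open scoped NNReal

lemma tvDist_eq_sum_filter {f g : ℕ → ℝ} {a : ℝ} {s : Finset ℕ} (hf : HasSum f a)
    (hg : HasSum g a) (hfs : ∀ k ∉ s, f k = 0) (hg0 : ∀ k, 0 ≤ g k) :
    tvDist f g = ∑ k ∈ s.filter (fun k => g k ≤ f k), (f k - g k) := by
  have hpos : HasSum (fun k => max (f k - g k) 0) (∑ k ∈ s, max (f k - g k) 0) :=
    hasSum_sum_of_ne_finset_zero fun k hk => by simp [hfs k hk, hg0 k]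
  have habs : HasSum (fun k => |f k - g k|) (2 * ∑ k ∈ s, max (f k - g k) 0 - (a - a)) := by
    refine ((hpos.mul_left 2).sub (hf.sub hg)).congr_fun fun k => ?_
    rcases le_total 0 (f k - g k) with h | h
    · rw [abs_of_nonneg h, max_eq_left h]; ring
    · simp [abs_of_nonpos h, max_eq_right h]
  rw [tvDist, habs.tsum_eq, sum_filter, sub_self, sub_zero, ← mul_assoc, one_div,
    inv_mul_cancel₀ two_ne_zero, one_mul]
  refine sum_congr rfl fun k _ => ?_
  split_ifs with h
  · exact max_eq_left (sub_nonneg.mpr h)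
  · exact max_eq_right (by linarith)

section Poisson

variable (r : ℝ≥0)

lemma hasSum_poissonPMFReal : HasSum (poissonPMFReal r) 1 :=
  hasSum_one_poissonMeasure r

lemma succ_mul_poissonPMFReal_succ (n : ℕ) :
    (n + 1) * poissonPMFReal r (n + 1) = r * poissonPMFReal r n := by
  simp only [poissonPMFReal, Nat.factorial_succ, Nat.cast_mul, Nat.cast_succ, pow_succ]
  field_simp

/-- Log-concavity: the ratio `π (i + 1) / π i = r / (i + 1)` decreases in `i`. -/
lemma poissonPMFReal_succ_mul_le {i j : ℕ} (hij : i ≤ j) :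
    poissonPMFReal r (j + 1) * poissonPMFReal r i ≤
      poissonPMFReal r (i + 1) * poissonPMFReal r j := by
  have hi := succ_mul_poissonPMFReal_succ r i
  have hj := succ_mul_poissonPMFReal_succ r j
  have key : ((i + 1) * (j + 1) : ℝ) * (poissonPMFReal r (j + 1) * poissonPMFReal r i) ≤
      ((i + 1) * (j + 1) : ℝ) * (poissonPMFReal r (i + 1) * poissonPMFReal r j) := by
    calc _ = (i + 1) * (r * (poissonPMFReal r i * poissonPMFReal r j)) := by
            linear_combination (i + 1) * poissonPMFReal r i * hj
      _ ≤ (j + 1) * (r * (poissonPMFReal r i * poissonPMFReal r j)) := by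
            have : 0 ≤ poissonPMFReal r i * poissonPMFReal r j :=
              mul_nonneg poissonPMFReal_nonneg poissonPMFReal_nonneg
            gcongr
      _ = _ := by linear_combination -(j + 1) * poissonPMFReal r j * hi
  exact le_of_mul_le_mul_left key (by positivity)

lemma sum_range_poissonPMFReal_mul_succ_le (j : ℕ) :
    (∑ i ∈ range (j + 1), poissonPMFReal r i) * poissonPMFReal r (j + 1) ≤
      (∑ i ∈ range (j + 2), poissonPMFReal r i) * poissonPMFReal r j := by
  calc _ ≤ (∑ i ∈ range (j + 1), poissonPMFReal r (i + 1)) * poissonPMFReal r j := by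
        rw [sum_mul, sum_mul]
        refine sum_le_sum fun i hi => ?_
        rw [mul_comm]
        exact poissonPMFReal_succ_mul_le r (Nat.lt_succ_iff.mp (mem_range.mp hi))
    _ ≤ _ := by
        gcongr
        · exact poissonPMFReal_nonneg
        · rw [sum_range_succ' _ (j + 1)]
          exact le_add_of_nonneg_right poissonPMFReal_nonneg

variable {r}

lemma one_sub_sum_range_poissonPMFReal (n : ℕ) :
    1 - ∑ i ∈ range n, poissonPMFReal r i = ∑' t, poissonPMFReal r (t + n) := by
  rw [← (hasSum_poissonPMFReal r).tsum_eq,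
    ← (hasSum_poissonPMFReal r).summable.sum_add_tsum_nat_add n, add_sub_cancel_left]

lemma one_sub_sum_range_poissonPMFReal_div_le (hr : 0 < r) (j : ℕ) :
    (1 - ∑ i ∈ range (j + 2), poissonPMFReal r i) / poissonPMFReal r (j + 1) ≤
      (1 - ∑ i ∈ range (j + 1), poissonPMFReal r i) / poissonPMFReal r j := by
  have hs (n : ℕ) : Summable fun t => poissonPMFReal r (t + n) :=
    (summable_nat_add_iff n).mpr (hasSum_poissonPMFReal r).summable
  rw [div_le_div_iff₀ (poissonPMFReal_pos hr) (poissonPMFReal_pos hr),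
    one_sub_sum_range_poissonPMFReal, one_sub_sum_range_poissonPMFReal,
    ← tsum_mul_right, ← tsum_mul_right]
  refine (hs _).mul_right _ |>.tsum_le_tsum (fun t => ?_) ((hs _).mul_right _)
  exact (poissonPMFReal_succ_mul_le r (by omega : j ≤ t + (j + 1))).trans_eq (mul_comm _ _)

end Poisson

section Stein

noncomputable def poissonSteinSolution (r : ℝ≥0) (A : Finset ℕ) : ℕ → ℝ
  | 0 => 0
  | j + 1 => (∑ i ∈ range (j + 1), poissonPMFReal r i *
      ((if i ∈ A then 1 else 0) - ∑ k ∈ A, poissonPMFReal r k)) / (r * poissonPMFReal r j)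

variable {r : ℝ≥0}

lemma poissonSteinSolution_spec (hr : 0 < r) (A : Finset ℕ) (j : ℕ) :
    r * poissonSteinSolution r A (j + 1) - j * poissonSteinSolution r A j =
      (if j ∈ A then 1 else 0) - ∑ k ∈ A, poissonPMFReal r k := by
  have hπ (n : ℕ) : poissonPMFReal r n ≠ 0 := (poissonPMFReal_pos hr).ne'
  cases j with
  | zero =>
    simp only [poissonSteinSolution, zero_add, range_one, sum_singleton]
    field_simp [hπ 0]
    ring
  | succ j =>
    have hrec := succ_mul_poissonPMFReal_succ r j
    simp only [poissonSteinSolution, sum_range_succ _ (j + 1)]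
    generalize (∑ i ∈ range (j + 1), _ : ℝ) = S
    push_cast
    field_simp [hπ j, hπ (j + 1)]
    linear_combination -S * hrec

lemma poissonSteinSolution_eq_sum_singleton (A : Finset ℕ) (j : ℕ) :
    poissonSteinSolution r A j = ∑ k ∈ A, poissonSteinSolution r {k} j := by
  cases j with
  | zero => simp [poissonSteinSolution]
  | succ j =>
    simp only [poissonSteinSolution, ← sum_div]
    rw [sum_comm]
    congr 1
    refine sum_congr rfl fun i _ => ?_
    rw [← mul_sum, sum_sub_distrib]
    simp

lemma poissonSteinSolution_singleton (k j : ℕ) :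
    poissonSteinSolution r {k} (j + 1) = poissonPMFReal r k / r *
      (((if k ≤ j then 1 else 0) - ∑ i ∈ range (j + 1), poissonPMFReal r i) /
        poissonPMFReal r j) := by
  simp only [poissonSteinSolution, mem_singleton, sum_singleton, mul_sub, sum_sub_distrib,
    mul_ite, mul_one, mul_zero, sum_ite_eq', mem_range, Nat.lt_succ_iff]
  rw [← sum_mul, div_mul_div_comm]
  split_ifs <;> ring

lemma poissonSteinSolution_singleton_sub_nonpos (hr : 0 < r) {k j : ℕ} (hk : k ≠ j + 1) :
    poissonSteinSolution r {k} (j + 2) - poissonSteinSolution r {k} (j + 1) ≤ 0 := by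
  rw [poissonSteinSolution_singleton, poissonSteinSolution_singleton, ← mul_sub]
  refine mul_nonpos_of_nonneg_of_nonpos (div_nonneg poissonPMFReal_nonneg r.2) ?_
  rcases lt_or_gt_of_ne hk with hk | hk
  · rw [if_pos (by omega), if_pos (by omega), sub_nonpos]
    exact one_sub_sum_range_poissonPMFReal_div_le hr j
  · rw [if_neg (by omega), if_neg (by omega), zero_sub, zero_sub, neg_div, neg_div,
      neg_sub_neg, sub_nonpos, div_le_div_iff₀ (poissonPMFReal_pos hr) (poissonPMFReal_pos hr)]
    exact sum_range_poissonPMFReal_mul_succ_le r j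

lemma poissonSteinSolution_singleton_succ_sub_le (hr : 0 < r) (j : ℕ) :
    poissonSteinSolution r {j + 1} (j + 2) - poissonSteinSolution r {j + 1} (j + 1) ≤ 1 / r := by
  have hπ := poissonPMFReal_pos (n := j) hr
  have hπ' := poissonPMFReal_pos (n := j + 1) hr
  have hcdf : poissonPMFReal r (j + 1) * (∑ i ∈ range (j + 1), poissonPMFReal r i) /
      poissonPMFReal r j ≤ ∑ i ∈ range (j + 2), poissonPMFReal r i := by
    rw [div_le_iff₀ hπ, mul_comm]
    exact sum_range_poissonPMFReal_mul_succ_le r j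
  rw [poissonSteinSolution_singleton, poissonSteinSolution_singleton, if_pos le_rfl,
    if_neg (by omega)]
  calc _ = ((1 - ∑ i ∈ range (j + 2), poissonPMFReal r i) + poissonPMFReal r (j + 1) *
        (∑ i ∈ range (j + 1), poissonPMFReal r i) / poissonPMFReal r j) / r := by
        field_simp
        ring
    _ ≤ 1 / r := by gcongr; linarith

lemma poissonSteinSolution_sub_le (hr : 0 < r) (A : Finset ℕ) (j : ℕ) :
    poissonSteinSolution r A (j + 2) - poissonSteinSolution r A (j + 1) ≤ 1 / r := by
  rw [poissonSteinSolution_eq_sum_singleton, poissonSteinSolution_eq_sum_singleton,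
    ← sum_sub_distrib]
  have hoff : ∑ k ∈ A.erase (j + 1), (poissonSteinSolution r {k} (j + 2) -
      poissonSteinSolution r {k} (j + 1)) ≤ 0 :=
    sum_nonpos fun k hk => poissonSteinSolution_singleton_sub_nonpos hr (ne_of_mem_erase hk)
  by_cases hA : j + 1 ∈ A
  · rw [← add_sum_erase _ _ hA]
    linarith [poissonSteinSolution_singleton_succ_sub_le hr j]
  · rw [← erase_eq_of_notMem hA]
    exact hoff.trans (by positivity)

end Stein

section Binomial

variable {p : ℝ}

lemma binomialPMFReal_nonneg (hp0 : 0 ≤ p) (hp1 : p ≤ 1) (n k : ℕ) :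
    0 ≤ binomialPMFReal n p k := by
  have : 0 ≤ 1 - p := sub_nonneg.mpr hp1
  unfold binomialPMFReal
  positivity

lemma binomialPMFReal_eq_zero_of_lt {n k : ℕ} (h : n < k) : binomialPMFReal n p k = 0 := by
  simp [binomialPMFReal, Nat.choose_eq_zero_of_lt h]

lemma binomialPMFReal_eq_zero_of_notMem_range {n k : ℕ} (hk : k ∉ range (n + 1)) :
    binomialPMFReal n p k = 0 :=
  binomialPMFReal_eq_zero_of_lt (by simpa [Nat.lt_succ_iff] using hk)

lemma sum_range_binomialPMFReal (n : ℕ) : ∑ k ∈ range (n + 1), binomialPMFReal n p k = 1 := by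
  simpa [binomialPMFReal, mul_assoc, mul_comm, mul_left_comm] using (add_pow p (1 - p) n).symm

lemma hasSum_binomialPMFReal (n : ℕ) : HasSum (binomialPMFReal n p) 1 := by
  rw [← sum_range_binomialPMFReal n]
  exact hasSum_sum_of_ne_finset_zero fun _ => binomialPMFReal_eq_zero_of_notMem_range

lemma binomialPMFReal_succ_zero (n : ℕ) :
    binomialPMFReal (n + 1) p 0 = (1 - p) * binomialPMFReal n p 0 := by
  simp [binomialPMFReal, pow_succ, mul_comm]

lemma binomialPMFReal_succ_succ (n k : ℕ) :
    binomialPMFReal (n + 1) p (k + 1) =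
      p * binomialPMFReal n p k + (1 - p) * binomialPMFReal n p (k + 1) := by
  rcases lt_or_ge k n with hk | hk
  · obtain ⟨d, rfl⟩ := Nat.exists_eq_add_of_lt hk
    simp only [binomialPMFReal, Nat.choose_succ_succ, Nat.cast_add]
    rw [show k + d + 1 + 1 - (k + 1) = d + 1 by omega, show k + d + 1 - k = d + 1 by omega,
      show k + d + 1 - (k + 1) = d by omega]
    ring
  · rw [binomialPMFReal_eq_zero_of_lt (by omega : n < k + 1)]
    simp only [binomialPMFReal, Nat.choose_succ_succ, Nat.choose_eq_zero_of_lt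
      (by omega : n < k + 1), Nat.add_sub_add_right, add_zero, mul_zero]
    ring

lemma succ_mul_binomialPMFReal_succ (n k : ℕ) :
    (k + 1) * binomialPMFReal (n + 1) p (k + 1) = (n + 1) * p * binomialPMFReal n p k := by
  have h : ((n + 1) * n.choose k : ℝ) = (n + 1).choose (k + 1) * (k + 1) := by
    exact_mod_cast Nat.add_one_mul_choose_eq n k
  simp only [binomialPMFReal, Nat.add_sub_add_right]
  linear_combination (-(p ^ (k + 1) * (1 - p) ^ (n - k))) * h

lemma sum_range_binomialPMFReal_succ_mul (n : ℕ) (G : ℕ → ℝ) :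
    ∑ k ∈ range (n + 2), binomialPMFReal (n + 1) p k * G k =
      ∑ k ∈ range (n + 1), binomialPMFReal n p k * ((1 - p) * G k + p * G (k + 1)) := by
  have hshift : ∑ k ∈ range (n + 1), binomialPMFReal n p k * G k =
      ∑ k ∈ range (n + 1), binomialPMFReal n p (k + 1) * G (k + 1) +
        binomialPMFReal n p 0 * G 0 := by
    rw [← sum_range_succ' (fun k => binomialPMFReal n p k * G k),
      sum_range_succ _ (n + 1), binomialPMFReal_eq_zero_of_lt n.lt_succ_self, zero_mul, add_zero]
  rw [sum_range_succ', binomialPMFReal_succ_zero]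
  simp only [binomialPMFReal_succ_succ, add_mul, mul_add, sum_add_distrib, mul_left_comm _ p,
    mul_left_comm _ (1 - p), mul_assoc, ← mul_sum, hshift]
  ring

lemma sum_range_mul_binomialPMFReal_succ (n : ℕ) (G : ℕ → ℝ) :
    ∑ k ∈ range (n + 2), k * binomialPMFReal (n + 1) p k * G k =
      (n + 1) * p * ∑ k ∈ range (n + 1), binomialPMFReal n p k * G (k + 1) := by
  rw [sum_range_succ', mul_sum, Nat.cast_zero, zero_mul, zero_mul, add_zero]
  refine sum_congr rfl fun k _ => ?_
  rw [Nat.cast_succ, succ_mul_binomialPMFReal_succ, mul_assoc]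

/-- Expectation of the Stein operator of `Po((n + 1) p)` under `Bin(n + 1, p)`. -/
lemma sum_range_binomialPMFReal_mul_stein (n : ℕ) (F : ℕ → ℝ) :
    ∑ k ∈ range (n + 2), binomialPMFReal (n + 1) p k * ((n + 1) * p * F (k + 1) - k * F k) =
      (n + 1) * p * p * ∑ k ∈ range (n + 1), binomialPMFReal n p k * (F (k + 2) - F (k + 1)) := by
  calc _ = (n + 1) * p * ∑ k ∈ range (n + 2), binomialPMFReal (n + 1) p k * F (k + 1) -
        ∑ k ∈ range (n + 2), k * binomialPMFReal (n + 1) p k * F k := by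
        rw [mul_sum, ← sum_sub_distrib]
        exact sum_congr rfl fun k _ => by ring
    _ = _ := by
        rw [sum_range_binomialPMFReal_succ_mul, sum_range_mul_binomialPMFReal_succ, ← mul_sub,
          ← sum_sub_distrib, mul_sum, mul_sum]
        exact sum_congr rfl fun k _ => by ring

end Binomial

theorem tvDist_binomialPMFReal_succ_poissonPMFReal_le {n : ℕ} {p : ℝ} (hp0 : 0 < p)
    (hp1 : p ≤ 1) {r : ℝ≥0} (hr : (r : ℝ) = (n + 1) * p) :
    tvDist (binomialPMFReal (n + 1) p) (poissonPMFReal r) ≤ p := by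
  have hr0 : 0 < r := by rw [← NNReal.coe_pos, hr]; positivity
  set A := (range (n + 2)).filter fun k => poissonPMFReal r k ≤ binomialPMFReal (n + 1) p k
  set F := poissonSteinSolution r A
  calc tvDist _ _ = ∑ k ∈ A, (binomialPMFReal (n + 1) p k - poissonPMFReal r k) :=
        tvDist_eq_sum_filter (hasSum_binomialPMFReal _) (hasSum_poissonPMFReal r)
          (fun _ => binomialPMFReal_eq_zero_of_notMem_range) fun _ => poissonPMFReal_nonneg
    _ = ∑ k ∈ range (n + 2), binomialPMFReal (n + 1) p k *
          ((if k ∈ A then 1 else 0) - ∑ i ∈ A, poissonPMFReal r i) := by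
        simp only [mul_sub, mul_ite, mul_one, mul_zero, sum_sub_distrib, sum_ite_mem, ← sum_mul]
        rw [inter_eq_right.mpr (filter_subset _ _), show range (n + 2) = range (n + 1 + 1) from rfl,
          sum_range_binomialPMFReal, one_mul]
    _ = ∑ k ∈ range (n + 2), binomialPMFReal (n + 1) p k *
          ((n + 1) * p * F (k + 1) - k * F k) := by
        simp only [← hr, F, poissonSteinSolution_spec hr0]
    _ = (n + 1) * p * p *
          ∑ k ∈ range (n + 1), binomialPMFReal n p k * (F (k + 2) - F (k + 1)) :=
        sum_range_binomialPMFReal_mul_stein n F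
    _ ≤ (n + 1) * p * p * ∑ k ∈ range (n + 1), binomialPMFReal n p k * (1 / r) := by
        gcongr with k
        · exact binomialPMFReal_nonneg hp0.le hp1 n k
        · exact poissonSteinSolution_sub_le hr0 A k
    _ = p := by
        rw [← sum_mul, sum_range_binomialPMFReal, hr]
        field_simp

lemma binomialPMFReal_eq_poissonPMFReal_zero {n : ℕ} {p : ℝ} (h : (n : ℝ) * p = 0) :
    binomialPMFReal n p = poissonPMFReal 0 := by
  rcases mul_eq_zero.mp h with hn | rfl
  · obtain rfl := Nat.cast_eq_zero.mp hn
    ext (_ | k) <;> simp [binomialPMFReal, poissonPMFReal]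
  · ext (_ | k) <;> simp [binomialPMFReal, poissonPMFReal]

theorem tvDist_binomialPMFReal_poissonPMFReal_le {n : ℕ} {p : ℝ} (hp0 : 0 ≤ p)
    (hp1 : p ≤ 1) {r : ℝ≥0} (hr : (r : ℝ) = n * p) :
    tvDist (binomialPMFReal n p) (poissonPMFReal r) ≤ p := by
  by_cases hnp : (n : ℝ) * p = 0
  · obtain rfl : r = 0 := NNReal.coe_eq_zero.mp (hr.trans hnp)
    simpa [binomialPMFReal_eq_poissonPMFReal_zero hnp, tvDist] using hp0
  obtain ⟨hn, hp⟩ := mul_ne_zero_iff.mp hnp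
  obtain ⟨n, rfl⟩ := Nat.exists_eq_succ_of_ne_zero (Nat.cast_ne_zero.mp hn)
  exact tvDist_binomialPMFReal_succ_poissonPMFReal_le (hp0.lt_of_ne' hp) hp1
    (by rw [hr]; push_cast; ring)

/-- the total variation distance between `Binomial(m', λ/m)` and
`Poisson(m'λ/m)` is at most `λ/m`. -/
theorem stmt_6 (m' m : ℕ) (lam : ℝ) (hlam : 0 < lam)
    (hlam' : lam / m ≤ 1) :
    tvDist (binomialPMFReal m' (lam / m))
      (poissonPMFReal ⟨(m' : ℝ) * lam / m, by positivity⟩) ≤ lam / m :=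
  tvDist_binomialPMFReal_poissonPMFReal_le (by positivity) hlam' (mul_div_assoc _ _ _)
end

section
/- The total variation distance between two Poisson distributions Poisson(λ) and Poisson(λ′) is at most |λ − λ′|. -/
/-!
If `λ ≤ λ'`, the subprobability `e^{λ - λ'} · Poisson(λ)`, of mass `e^{λ - λ'}`, lies below
both `Poisson(λ)` and `Poisson(λ')`. Any common lower bound of mass `c` of two probability mass
functions bounds their total variation distance by `1 - c`, and `1 - e^{λ - λ'} ≤ λ' - λ`.
-/

open ProbabilityTheory Real

set_option linter.deprecated false

lemma tvDist_comm (f g : ℕ → ℝ) : tvDist f g = tvDist g f := by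
  simp only [tvDist, abs_sub_comm (f _)]

lemma hasSum_abs_sub_of_le {ι : Type*} {f g : ι → ℝ} {a b : ℝ} (hfg : f ≤ g)
    (hf : HasSum f a) (hg : HasSum g b) : HasSum (fun k => |g k - f k|) (b - a) := by
  simpa only [abs_of_nonneg (sub_nonneg.2 (hfg _))] using hg.sub hf

lemma tvDist_le_of_le_of_le {f g h : ℕ → ℝ} {a b c : ℝ} (hf : HasSum f a) (hg : HasSum g b)
    (hh : HasSum h c) (hhf : h ≤ f) (hhg : h ≤ g) : tvDist f g ≤ (a + b) / 2 - c := by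
  have hbound := (hasSum_abs_sub_of_le hhf hh hf).add (hasSum_abs_sub_of_le hhg hh hg)
  have htriangle : ∀ k, |f k - g k| ≤ |f k - h k| + |g k - h k| := fun k =>
    (abs_sub_le _ (h k) _).trans_eq (by rw [abs_sub_comm (h k)])
  have hsummable : Summable fun k => |f k - g k| :=
    hbound.summable.of_nonneg_of_le (fun _ => abs_nonneg _) htriangle
  calc tvDist f g ≤ (1 / 2) * (a - c + (b - c)) := by
        rw [tvDist, ← hbound.tsum_eq]
        exact mul_le_mul_of_nonneg_left (hsummable.tsum_le_tsum htriangle hbound.summable)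
          (by norm_num)
    _ = (a + b) / 2 - c := by ring

lemma exp_sub_mul_poissonPMFReal_le_left (a b : NNReal) (hab : a ≤ b) (k : ℕ) :
    exp (a - b) * poissonPMFReal a k ≤ poissonPMFReal a k :=
  mul_le_of_le_one_left (by unfold poissonPMFReal; positivity) (exp_le_one_iff.2 (sub_nonpos.2 hab))

lemma exp_sub_mul_poissonPMFReal_le_right (a b : NNReal) (hab : a ≤ b) (k : ℕ) :
    exp (a - b) * poissonPMFReal a k ≤ poissonPMFReal b k := by
  have hexp : exp (a - b) * exp (-a) = exp (-b) := by rw [← exp_add]; ring_nf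
  unfold poissonPMFReal
  rw [← mul_div_assoc, ← mul_assoc, hexp]
  gcongr

lemma tvDist_poissonPMFReal_le_of_le (a b : NNReal) (hab : a ≤ b) :
    tvDist (poissonPMFReal a) (poissonPMFReal b) ≤ b - a := by
  have hsum (r : NNReal) : HasSum (poissonPMFReal r) 1 := hasSum_one_poissonMeasure r
  calc tvDist (poissonPMFReal a) (poissonPMFReal b) ≤ (1 + 1) / 2 - exp (a - b) :=
        tvDist_le_of_le_of_le (hsum a) (hsum b) (by simpa using (hsum a).mul_left (exp (a - b)))
          (exp_sub_mul_poissonPMFReal_le_left a b hab) (exp_sub_mul_poissonPMFReal_le_right a b hab)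
    _ ≤ b - a := by linarith [add_one_le_exp ((a : ℝ) - b)]

/-- the total variation distance between `Poisson(λ)` and `Poisson(λ')`
is at most `|λ - λ'|`. -/
theorem stmt_7 (lam lam' : NNReal) :
    tvDist (poissonPMFReal lam) (poissonPMFReal lam') ≤ |(lam : ℝ) - (lam' : ℝ)| := by
  rcases le_total lam lam' with h | h
  · rw [abs_sub_comm]
    exact (tvDist_poissonPMFReal_le_of_le lam lam' h).trans (le_abs_self _)
  · rw [tvDist_comm]
    exact (tvDist_poissonPMFReal_le_of_le lam' lam h).trans (le_abs_self _)
end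

section
/- Row separation of the block eigenspace: let D̄ be the n×n block matrix with K equal blocks of size n/K, within-block value σ₁ and between-block value σ₂ (σ₁ > σ₂), zero diagonal, and let W be the n×K matrix of orthonormal eigenvectors corresponding to the K largest (in absolute value) eigenvalues of D̄. Then any two rows u_i, u_j of W corresponding to vertices in different blocks satisfy ‖u_i − u_j‖₂ = √(2K/n). -/
open Matrix Finset

/-!
Since `D̄ + σ₁ I` has block-constant rows, every eigenvector of `D̄` whose eigenvalue is not `-σ₁`
is constant on blocks. Hence the row of `W` at a vertex of block `b` is the row `b` of a `K × K`
matrix `V`; as every block has `m` vertices, `Wᵀ W = m Vᵀ V = 1` makes `√m V` orthogonal, so the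
rows of `V` are orthogonal of squared length `1/m`, and two rows of `W` from different blocks are
at squared distance `2/m = 2K/n`.
-/

namespace Matrix

variable {ι κ R : Type*} [Fintype ι]

theorem apply_eq_apply_of_mulVec_eq_smul {β : Type*} [Field R] [DecidableEq ι]
    {D : Matrix ι ι R} {c μ : R} {v : ι → R} (f : ι → β) (A : β → ι → R)
    (hD : ∀ i, (D + c • 1) i = A (f i)) (hv : D *ᵥ v = μ • v) (hμ : μ + c ≠ 0)
    {i j : ι} (hij : f i = f j) : v i = v j := by
  have hshift : (D + c • 1) *ᵥ v = (μ + c) • v := by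
    rw [add_mulVec, smul_mulVec, one_mulVec, hv, add_smul]
  have hrow : ∀ i, (μ + c) * v i = A (f i) ⬝ᵥ v := fun i => by
    rw [← hD i, ← smul_eq_mul, ← Pi.smul_apply, ← hshift]
    rfl
  exact mul_left_cancel₀ hμ (by rw [hrow, hrow, hij])

variable [Fintype κ] [DecidableEq κ] {f : ι → κ} {m : ℕ}

theorem sum_comp_of_card_fiber [Semiring R] (hfib : ∀ b, #{i | f i = b} = m)
    (g : κ → R) : ∑ i, g (f i) = m * ∑ b, g b := by
  rw [← sum_fiberwise univ f, mul_sum]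
  refine sum_congr rfl fun b _ => ?_
  rw [sum_congr rfl fun i hi => congrArg g (mem_filter.mp hi).2, sum_const, hfib, nsmul_eq_mul]

theorem transpose_mul_self_submatrix [CommRing R] (hfib : ∀ b, #{i | f i = b} = m)
    (V : Matrix κ κ R) :
    (V.submatrix f id)ᵀ * V.submatrix f id = (m : R) • (Vᵀ * V) := by
  ext k l
  simp only [mul_apply, transpose_apply, submatrix_apply, id, smul_apply, smul_eq_mul]
  exact sum_comp_of_card_fiber hfib fun b => V b k * V b l

theorem mul_transpose_self_eq_inv_smul_one [Field R] (hm : (m : R) ≠ 0)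
    (hfib : ∀ b, #{i | f i = b} = m) {V : Matrix κ κ R}
    (hV : (V.submatrix f id)ᵀ * V.submatrix f id = 1) : V * Vᵀ = (m : R)⁻¹ • 1 := by
  rw [transpose_mul_self_submatrix hfib, ← smul_mul, mul_eq_one_comm, mul_smul_comm] at hV
  rw [← hV, smul_smul, inv_mul_cancel₀ hm, one_smul]

theorem sum_sq_sub_of_factorsThrough [Field R] (hm : (m : R) ≠ 0)
    (hfib : ∀ b, #{i | f i = b} = m) {W : Matrix ι κ R} (hW : Wᵀ * W = 1)
    (hconst : Function.FactorsThrough W f) {i j : ι} (hij : f i ≠ f j) :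
    ∑ k, (W i k - W j k) ^ 2 = 2 / m := by
  set V : Matrix κ κ R := Function.extend f W 0
  have hWV : W = V.submatrix f id := by
    ext i k
    exact congrFun (hconst.extend_apply 0 i).symm k
  have hrow : ∀ b c, ∑ k, V b k * V c k = if b = c then (m : R)⁻¹ else 0 := fun b c => by
    have := congrFun₂ (mul_transpose_self_eq_inv_smul_one hm hfib (hWV ▸ hW)) b c
    simpa [mul_apply, one_apply] using this
  calc ∑ k, (W i k - W j k) ^ 2
      = ∑ k, V (f i) k * V (f i) k + ∑ k, V (f j) k * V (f j) k
          - 2 * ∑ k, V (f i) k * V (f j) k := by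
        rw [← sum_add_distrib, mul_sum, ← sum_sub_distrib, hWV]
        exact sum_congr rfl fun k _ => by simp only [submatrix_apply, id]; ring
    _ = 2 / m := by simp only [hrow, hij, if_true, if_false]; ring

end Matrix

theorem Fin.card_filter_divNat_eq (K m : ℕ) (b : Fin K) : #{i : Fin (K * m) | i.divNat = b} = m := by
  have hdiv (p : Fin K × Fin m) : (finProdFinEquiv p).divNat = p.1 := by
    simpa using congrArg Prod.fst (finProdFinEquiv_symm_apply (finProdFinEquiv p)).symm
  rw [card_filter, ← finProdFinEquiv.sum_comp, Fintype.sum_prod_type]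
  simp [hdiv]

theorem stmt_11_general (K m : ℕ) (n : ℕ) (hn : n = K * m)
    (σ₁ σ₂ : ℝ)
    (D : Matrix (Fin n) (Fin n) ℝ)
    (hD : ∀ i j : Fin n, D i j =
      if i = j then 0 else if i.val / m = j.val / m then σ₁ else σ₂)
    (W : Matrix (Fin n) (Fin K) ℝ) (hWorth : Wᵀ * W = 1)
    (μ : Fin K → ℝ)
    (hWeig : ∀ k, D *ᵥ (fun i => W i k) = μ k • (fun i => W i k))
    (htop : ∀ k, μ k ≠ -σ₁) :
    ∀ i j : Fin n, i.val / m ≠ j.val / m →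
      Real.sqrt (∑ k, (W i k - W j k) ^ 2) = Real.sqrt (2 * K / n) := by
  subst hn
  intro i j hij
  have hblock : ∀ i j : Fin (K * m), i.val / m = j.val / m ↔ i.divNat = j.divNat := by
    simp [Fin.ext_iff, Fin.coe_divNat]
  set A : Fin K → Fin (K * m) → ℝ := fun b j => if b = j.divNat then σ₁ else σ₂
  have hDshift : ∀ i, (D + σ₁ • 1) i = A i.divNat := by
    intro i; funext j
    by_cases h : i = j <;> simp [A, hD, h, hblock, one_apply]
  have hconst : Function.FactorsThrough W Fin.divNat := fun i j h => funext fun k =>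
    apply_eq_apply_of_mulVec_eq_smul Fin.divNat A hDshift (hWeig k)
      (fun h' => htop k (eq_neg_of_add_eq_zero_left h')) h
  have hKm : K * m ≠ 0 := i.pos.ne'
  have hK : (K : ℝ) ≠ 0 := by exact_mod_cast left_ne_zero_of_mul hKm
  have hm : (m : ℝ) ≠ 0 := by exact_mod_cast right_ne_zero_of_mul hKm
  rw [sum_sq_sub_of_factorsThrough hm (Fin.card_filter_divNat_eq K m) hWorth hconst
    (mt (hblock i j).mpr hij)]
  congr 1
  push_cast
  field_simp

/-- row separation of the block eigenspace: if `W` is an `n × K` matrix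
whose columns form an orthonormal family of eigenvectors of the block-constant matrix
`D̄` corresponding to the `K` largest-in-absolute-value eigenvalues (equivalently, to
eigenvalues different from `-σ₁`), then any two rows of `W` belonging to different
blocks are at Euclidean distance exactly `√(2K/n)`. -/
theorem stmt_11 (K m : ℕ) (hK : 1 ≤ K) (hm : 1 ≤ m) (n : ℕ) (hn : n = K * m)
    (σ₁ σ₂ : ℝ) (h12 : σ₂ < σ₁) (h2 : 0 < σ₂)
    (D : Matrix (Fin n) (Fin n) ℝ)
    (hD : ∀ i j : Fin n, D i j =
      if i = j then 0 else if i.val / m = j.val / m then σ₁ else σ₂)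
    (W : Matrix (Fin n) (Fin K) ℝ) (hWorth : Wᵀ * W = 1)
    (μ : Fin K → ℝ)
    (hWeig : ∀ k, D *ᵥ (fun i => W i k) = μ k • (fun i => W i k))
    (htop : ∀ k, μ k ≠ -σ₁) :
    ∀ i j : Fin n, i.val / m ≠ j.val / m →
      Real.sqrt (∑ k, (W i k - W j k) ^ 2) = Real.sqrt (2 * K / n) :=
  stmt_11_general K m n hn σ₁ σ₂ D hD W hWorth μ hWeig htop
end
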